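/- arXiv:1609.06425 — 2 statements merged into one kernel-verified Lean document; each statement's English description precedes it below -/
import Mathlib

section
/- Suppose F_0(z) = Σ_{d≥1} n_{0,d} e^{dz} (with n_{0,d} > 0) converges exactly on (-∞, x_0) and on this interval satisfies (27 + 2F_0' - 3F_0'') F_0''' = 6F_0 - 33F_0' + 54F_0'' + (F_0'')^2. If additionally 27 + 2F_0'(z) - 3F_0''(z) > 0 for all z < x_0, then F_0, F_0', F_0'' all have finite limits as z → x_0^-, and F_0(x_0^-) < F_0'(x_0^-) < F_0''(x_0^-) ≤ 27. -/
/-!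
Each `F k` is a series in `e^z` with nonnegative coefficients `d^k n_d`, so it is nondecreasing
on `(-∞, x₀)`, and `F 0 ≤ F 1 ≤ F 2` there since `d^k ≤ d^(k+1)` for `d ≥ 1`. Hence
`27 - F 2 ≥ 27 + 2 F 1 - 3 F 2 > 0`, so all three functions are bounded by `27` and have left
limits at `x₀`. The differences `F (k+1) - F k` are again such series, with the positive
coefficient `2^k n_2` at `d = 2`; being nondecreasing, their limits are at least their (positive)
values at `x₀ - 1`.
-/

open Filter Set Real Topology

noncomputable def expSum (a : ℕ → ℝ) (z : ℝ) : ℝ := ∑' d : ℕ, a d * exp (d * z)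

section expSum

variable {a b : ℕ → ℝ} {s : Set ℝ} {z : ℝ}

lemma expSum_le_expSum (hab : ∀ d, a d ≤ b d) (ha : Summable fun d : ℕ => a d * exp (d * z))
    (hb : Summable fun d : ℕ => b d * exp (d * z)) : expSum a z ≤ expSum b z :=
  ha.tsum_le_tsum (fun d => mul_le_mul_of_nonneg_right (hab d) (exp_pos _).le) hb

lemma expSum_sub (ha : Summable fun d : ℕ => a d * exp (d * z))
    (hb : Summable fun d : ℕ => b d * exp (d * z)) :
    expSum a z - expSum b z = expSum (fun d => a d - b d) z := by
  simp only [expSum, ← ha.tsum_sub hb, sub_mul]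

lemma expSum_pos (ha : ∀ d, 0 ≤ a d) (hs : Summable fun d : ℕ => a d * exp (d * z)) {d : ℕ}
    (hd : 0 < a d) : 0 < expSum a z :=
  hs.tsum_pos (fun d => mul_nonneg (ha d) (exp_pos _).le) d (mul_pos hd (exp_pos _))

lemma monotoneOn_expSum (ha : ∀ d, 0 ≤ a d)
    (hs : ∀ z ∈ s, Summable fun d : ℕ => a d * exp (d * z)) : MonotoneOn (expSum a) s :=
  fun _ hz₁ _ hz₂ h => (hs _ hz₁).tsum_le_tsum (fun d => mul_le_mul_of_nonneg_left
    (exp_le_exp.mpr (mul_le_mul_of_nonneg_left h d.cast_nonneg)) (ha d)) (hs _ hz₂)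

end expSum

lemma MonotoneOn.le_of_tendsto_nhdsLT {g : ℝ → ℝ} {x₀ L z : ℝ} (hg : MonotoneOn g (Iio x₀))
    (hlim : Tendsto g (𝓝[<] x₀) (𝓝 L)) (hz : z < x₀) : g z ≤ L :=
  ge_of_tendsto hlim <| eventually_of_mem (Ioo_mem_nhdsLT hz) fun _ hy =>
    hg hz (mem_Iio.mpr hy.2) hy.1.le

section Coefficients

variable {n : ℕ → ℝ}

lemma pow_mul_le_pow_mul (hn0 : n 0 = 0) (hn : ∀ d, 0 ≤ n d) {j k : ℕ} (hjk : j ≤ k) (d : ℕ) :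
    (d : ℝ) ^ j * n d ≤ (d : ℝ) ^ k * n d := by
  rcases d with _ | d
  · simp [hn0]
  · exact mul_le_mul_of_nonneg_right (pow_le_pow_right₀ (by simp) hjk) (hn _)

lemma lt_of_tendsto_expSum_pow (hn0 : n 0 = 0) (hn : ∀ d, 0 ≤ n d) (hn2 : 0 < n 2)
    {x₀ L M : ℝ} {k : ℕ}
    (hsk : ∀ z < x₀, Summable fun d : ℕ => (d : ℝ) ^ k * n d * exp (d * z))
    (hsk' : ∀ z < x₀, Summable fun d : ℕ => (d : ℝ) ^ (k + 1) * n d * exp (d * z))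
    (hL : Tendsto (expSum fun d : ℕ => (d : ℝ) ^ k * n d) (𝓝[<] x₀) (𝓝 L))
    (hM : Tendsto (expSum fun d : ℕ => (d : ℝ) ^ (k + 1) * n d) (𝓝[<] x₀) (𝓝 M)) : L < M := by
  set gap : ℕ → ℝ := fun d => (d : ℝ) ^ (k + 1) * n d - (d : ℝ) ^ k * n d
  have hgap_nonneg : ∀ d, 0 ≤ gap d := fun d =>
    sub_nonneg.mpr (pow_mul_le_pow_mul hn0 hn k.le_succ d)
  have hgap_summable : ∀ z ∈ Iio x₀, Summable fun d : ℕ => gap d * exp (d * z) := fun z hz => by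
    simpa only [gap, sub_mul] using (hsk' z hz).sub (hsk z hz)
  have hgap_eq : EqOn (expSum gap)
      ((expSum fun d : ℕ => (d : ℝ) ^ (k + 1) * n d) - expSum fun d : ℕ => (d : ℝ) ^ k * n d)
      (Iio x₀) :=
    fun z hz => (expSum_sub (hsk' z hz) (hsk z hz)).symm
  have hgap_two : 0 < gap 2 := by
    simp only [gap, pow_succ]
    push_cast
    nlinarith [pow_pos (two_pos (α := ℝ)) k]
  have hgap_pos : 0 < expSum gap (x₀ - 1) :=
    expSum_pos hgap_nonneg (hgap_summable _ (sub_one_lt x₀)) hgap_two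
  have hgap_le : expSum gap (x₀ - 1) ≤ M - L := by
    rw [hgap_eq (sub_one_lt x₀)]
    exact ((monotoneOn_expSum hgap_nonneg hgap_summable).congr hgap_eq).le_of_tendsto_nhdsLT
      (hM.sub hL) (sub_one_lt x₀)
  linarith

end Coefficients

theorem limits_at_radius_from_wdvv_general
    (n : ℕ → ℝ) (hn0 : n 0 = 0) (hn : ∀ d : ℕ, 1 ≤ d → 0 < n d)
    (x0 : ℝ)
    (F : ℕ → ℝ → ℝ)
    (hF : ∀ k : ℕ, ∀ z : ℝ, F k z = ∑' d : ℕ, (d : ℝ) ^ k * n d * Real.exp (d * z))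
    (hconv : ∀ z : ℝ, z < x0 →
      ∀ k : ℕ, k ≤ 3 → Summable (fun d : ℕ => (d : ℝ) ^ k * n d * Real.exp (d * z)))
    (hpos : ∀ z : ℝ, z < x0 → 0 < 27 + 2 * F 1 z - 3 * F 2 z) :
    ∃ L0 L1 L2 : ℝ,
      Filter.Tendsto (F 0) (nhdsWithin x0 (Set.Iio x0)) (nhds L0) ∧
      Filter.Tendsto (F 1) (nhdsWithin x0 (Set.Iio x0)) (nhds L1) ∧
      Filter.Tendsto (F 2) (nhdsWithin x0 (Set.Iio x0)) (nhds L2) ∧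
      L0 < L1 ∧ L1 < L2 ∧ L2 ≤ 27 := by
  have hn_nonneg : ∀ d, 0 ≤ n d := fun d =>
    d.eq_zero_or_pos.elim (fun h => h ▸ hn0.ge) fun h => (hn d h).le
  have hFexp : ∀ k, F k = expSum fun d : ℕ => (d : ℝ) ^ k * n d := fun k => funext (hF k)
  have hsum : ∀ k ≤ 3, ∀ z < x0, Summable fun d : ℕ => (d : ℝ) ^ k * n d * exp (d * z) :=
    fun k hk z hz => hconv z hz k hk
  have hle_F2 : ∀ k ≤ 2, ∀ z < x0, F k z ≤ F 2 z := fun k hk z hz => by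
    rw [hFexp, hFexp]
    exact expSum_le_expSum (pow_mul_le_pow_mul hn0 hn_nonneg hk) (hsum k (by omega) z hz)
      (hsum 2 (by omega) z hz)
  have hF2_lt : ∀ z < x0, F 2 z < 27 := fun z hz => by
    linarith [hpos z hz, hle_F2 1 (by omega) z hz]
  have hlim : ∀ k ≤ 2, Tendsto (F k) (𝓝[<] x0) (𝓝 (sSup (F k '' Iio x0))) := by
    intro k hk
    refine MonotoneOn.tendsto_nhdsLT ?_ ⟨27, ?_⟩
    · rw [hFexp]
      exact monotoneOn_expSum (fun d => mul_nonneg (by positivity) (hn_nonneg d))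
        fun z hz => hsum k (by omega) z hz
    · rintro _ ⟨z, hz, rfl⟩
      exact (hle_F2 k hk z hz).trans (hF2_lt z hz).le
  have hgap : ∀ k ≤ 1, sSup (F k '' Iio x0) < sSup (F (k + 1) '' Iio x0) := fun k hk =>
    lt_of_tendsto_expSum_pow hn0 hn_nonneg (hn 2 (by norm_num)) (hsum k (by omega))
      (hsum (k + 1) (by omega)) (hFexp k ▸ hlim k (by omega))
      (hFexp (k + 1) ▸ hlim (k + 1) (by omega))
  refine ⟨_, _, _, hlim 0 (by norm_num), hlim 1 (by norm_num), hlim 2 le_rfl, hgap 0 (by norm_num),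
    hgap 1 le_rfl, ?_⟩
  exact le_of_tendsto (hlim 2 le_rfl) (eventually_nhdsWithin_of_forall fun z hz => (hF2_lt z hz).le)

theorem limits_at_radius_from_wdvv
    (n : ℕ → ℝ) (hn0 : n 0 = 0) (hn : ∀ d : ℕ, 1 ≤ d → 0 < n d)
    (x0 : ℝ)
    (F : ℕ → ℝ → ℝ)
    (hF : ∀ k : ℕ, ∀ z : ℝ, F k z = ∑' d : ℕ, (d : ℝ) ^ k * n d * Real.exp (d * z))
    (hconv : ∀ z : ℝ, z < x0 →
      ∀ k : ℕ, k ≤ 3 → Summable (fun d : ℕ => (d : ℝ) ^ k * n d * Real.exp (d * z)))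
    (hdiv : ∀ z : ℝ, x0 ≤ z → ¬ Summable (fun d : ℕ => n d * Real.exp (d * z)))
    (hode : ∀ z : ℝ, z < x0 →
      (27 + 2 * F 1 z - 3 * F 2 z) * F 3 z =
        6 * F 0 z - 33 * F 1 z + 54 * F 2 z + (F 2 z) ^ 2)
    (hpos : ∀ z : ℝ, z < x0 → 0 < 27 + 2 * F 1 z - 3 * F 2 z) :
    ∃ L0 L1 L2 : ℝ,
      Filter.Tendsto (F 0) (nhdsWithin x0 (Set.Iio x0)) (nhds L0) ∧
      Filter.Tendsto (F 1) (nhdsWithin x0 (Set.Iio x0)) (nhds L1) ∧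
      Filter.Tendsto (F 2) (nhdsWithin x0 (Set.Iio x0)) (nhds L2) ∧
      L0 < L1 ∧ L1 < L2 ∧ L2 ≤ 27 :=
  limits_at_radius_from_wdvv_general n hn0 hn x0 F hF hconv hpos
end

section
/- Let (x,y,w) solve the system x' = 27x + 4y², y' = 9x + 18y + 2yw, w' = 3x + 6y + 9w + w² on (-∞, t_0), with x,y,w > 0 and 2y - 3w > 0 on (-∞, t_0), and suppose ∫_{t_0-1}^{t_0} (y+w) dt = +∞. Then (2y-3w)(t) → +∞ as t → t_0⁻, and there exists a unique t_1 ∈ (-∞, t_0) with (2y - 3w)(t_1) = 27. -/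
/-! With `u = 2y - 3w` the system gives `u' = 9x + (9 + w)u + 2wy`, so `u` is strictly increasing
and `u' ≥ 9u`, which forces `u → 0` at `-∞`. On `(t0 - 1, t0)`, since `w` increases and
`3w < 2y`, also `u' ≥ 2 w(t0 - 1) y ≥ (6/5) w(t0 - 1) (y + w)`, so `u` grows at least like a
positive multiple of `∫ (y + w)`, which diverges. By continuity and strict monotonicity `u`
then takes the value `27` exactly once. -/

open Set Filter Topology MeasureTheory

theorem strictMonoOn_Iio_of_hasDerivAt_pos {f f' : ℝ → ℝ} {b : ℝ}
    (hf : ∀ t < b, HasDerivAt f (f' t) t) (hf' : ∀ t < b, 0 < f' t) :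
    StrictMonoOn f (Iio b) :=
  strictMonoOn_of_hasDerivWithinAt_pos (convex_Iio b)
    (fun t ht => (hf t ht).continuousAt.continuousWithinAt)
    (fun t ht => (hf t (interior_subset (s := Iio b) ht)).hasDerivWithinAt)
    (fun t ht => hf' t (interior_subset (s := Iio b) ht))

theorem tendsto_intervalIntegral_nhdsLT_atTop_of_lintegral_eq_top {f : ℝ → ℝ} {a b : ℝ}
    (hab : a < b) (hf : LocallyIntegrableOn f (Ico a b)) (hf₀ : ∀ t ∈ Ioo a b, 0 ≤ f t)
    (htop : ∫⁻ t in Ioo a b, ENNReal.ofReal (f t) = ⊤) :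
    Tendsto (fun t => ∫ s in a..t, f s) (𝓝[<] b) atTop := by
  rw [← ENNReal.tendsto_ofReal_nhds_top, ← htop]
  have hcover : AECover (volume.restrict (Ioo a b)) (𝓝[<] b) (fun t => Ioo a t) :=
    aecover_Ioo_of_Ioo tendsto_const_nhds nhdsWithin_le_nhds
  refine (hcover.lintegral_tendsto_of_countably_generated
    (hf.aestronglyMeasurable.mono_set Ioo_subset_Ico_self).aemeasurable.ennreal_ofReal).congr' ?_
  filter_upwards [Ioo_mem_nhdsLT hab] with t ht
  have hint : IntegrableOn f (Ioo a t) :=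
    (hf.integrableOn_compact_subset (Icc_subset_Ico_right ht.2) isCompact_Icc).mono_set
      Ioo_subset_Icc_self
  rw [Measure.restrict_restrict measurableSet_Ioo,
    inter_eq_left.2 (Ioo_subset_Ioo_right ht.2.le), intervalIntegral.integral_of_le ht.1.le,
    integral_Ioc_eq_integral_Ioo, ofReal_integral_eq_lintegral_ofReal hint
      (ae_restrict_of_forall_mem measurableSet_Ioo fun s hs => hf₀ s ⟨hs.1, hs.2.trans ht.2⟩)]

theorem tendsto_nhdsLT_atTop_of_mul_le_deriv {u u' f : ℝ → ℝ} {a b c : ℝ} (hab : a < b)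
    (hc : 0 < c) (hu : ∀ t ∈ Ico a b, HasDerivAt u (u' t) t)
    (hf : LocallyIntegrableOn f (Ico a b)) (hf₀ : ∀ t ∈ Ioo a b, 0 ≤ f t)
    (hle : ∀ t ∈ Ioo a b, c * f t ≤ u' t)
    (htop : ∫⁻ t in Ioo a b, ENNReal.ofReal (f t) = ⊤) :
    Tendsto u (𝓝[<] b) atTop := by
  have hbound : ∀ t ∈ Ioo a b, u a + c * ∫ s in a..t, f s ≤ u t := by
    intro t ht
    have hsub : Icc a t ⊆ Ico a b := Icc_subset_Ico_right ht.2
    have h := intervalIntegral.integral_le_sub_of_hasDeriv_right_of_le ht.1.le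
      (fun s hs => (hu s (hsub hs)).continuousAt.continuousWithinAt)
      (fun s hs => (hu s (hsub (Ioo_subset_Icc_self hs))).hasDerivWithinAt)
      ((hf.integrableOn_compact_subset hsub isCompact_Icc).const_mul c)
      (fun s hs => hle s ⟨hs.1, hs.2.trans ht.2⟩)
    rw [intervalIntegral.integral_const_mul] at h
    linarith
  have hI := tendsto_intervalIntegral_nhdsLT_atTop_of_lintegral_eq_top hab hf hf₀ htop
  refine tendsto_atTop_mono' _ ?_ (tendsto_atTop_add_const_left _ (u a) (hI.const_mul_atTop hc))
  filter_upwards [Ioo_mem_nhdsLT hab] with t ht using hbound t ht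

theorem tendsto_atBot_nhds_zero_of_mul_le_deriv {u u' : ℝ → ℝ} {b k : ℝ} (hk : 0 < k)
    (hu : ∀ t < b, HasDerivAt u (u' t) t) (hle : ∀ t < b, k * u t ≤ u' t)
    (hu₀ : ∀ t < b, 0 ≤ u t) :
    Tendsto u atBot (𝓝 0) := by
  set g : ℝ → ℝ := fun t => u t * Real.exp (-k * t)
  have hg : ∀ t < b, HasDerivAt g ((u' t - k * u t) * Real.exp (-k * t)) t := by
    intro t ht
    exact ((hu t ht).mul ((hasDerivAt_id' t).const_mul (-k)).exp).congr_deriv (by ring)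
  have hg_mono : MonotoneOn g (Iio b) :=
    monotoneOn_of_hasDerivWithinAt_nonneg (convex_Iio b)
      (fun t ht => (hg t ht).continuousAt.continuousWithinAt)
      (fun t ht => (hg t (interior_subset (s := Iio b) ht)).hasDerivWithinAt)
      (fun t ht => mul_nonneg (sub_nonneg.2 (hle t (interior_subset (s := Iio b) ht)))
        (Real.exp_pos _).le)
  -- `u s = g s * exp (k s) ≤ g (b - 1) * exp (k s)` for `s ≤ b - 1`
  have hexp : Tendsto (fun s => g (b - 1) * Real.exp (k * s)) atBot (𝓝 0) := by
    simpa using (Real.tendsto_exp_atBot.comp (tendsto_id.const_mul_atBot hk)).const_mul (g (b - 1))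
  refine tendsto_of_tendsto_of_tendsto_of_le_of_le' tendsto_const_nhds hexp ?_ ?_
  · filter_upwards [eventually_lt_atBot b] with s hs using hu₀ s hs
  · filter_upwards [eventually_le_atBot (b - 1)] with s hs
    have h := mul_le_mul_of_nonneg_right
      (hg_mono (show s < b by linarith) (show b - 1 < b by linarith) hs) (Real.exp_pos (k * s)).le
    rwa [mul_assoc, ← Real.exp_add, neg_mul, neg_add_cancel, Real.exp_zero, mul_one] at h

theorem existsUnique_eq_of_strictMonoOn_Iio {u : ℝ → ℝ} {b l v : ℝ}
    (hmono : StrictMonoOn u (Iio b)) (hcont : ContinuousOn u (Iio b))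
    (hbot : Tendsto u atBot (𝓝 l)) (htop : Tendsto u (𝓝[<] b) atTop) (hv : l < v) :
    ∃! t, t < b ∧ u t = v := by
  obtain ⟨s, hsv, hs⟩ := ((hbot.eventually (eventually_le_nhds hv)).and
    (eventually_lt_atBot b)).exists
  obtain ⟨t, hvt, ht⟩ := ((htop.eventually (eventually_ge_atTop v)).and
    self_mem_nhdsWithin).exists
  have hst : s ≤ t := (hmono.le_iff_le hs ht).1 (hsv.trans hvt)
  obtain ⟨r, hr, hrv⟩ := intermediate_value_Icc hst
    (hcont.mono fun z hz => hz.2.trans_lt ht) ⟨hsv, hvt⟩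
  exact ⟨r, ⟨hr.2.trans_lt ht, hrv⟩, fun r' hr' =>
    hmono.injOn hr'.1 (hr.2.trans_lt ht) (hr'.2.trans hrv.symm)⟩

theorem hasDerivAt_two_mul_sub_three_mul {x y w : ℝ → ℝ} {t : ℝ}
    (hy : HasDerivAt y (9 * x t + 18 * y t + 2 * y t * w t) t)
    (hw : HasDerivAt w (3 * x t + 6 * y t + 9 * w t + (w t) ^ 2) t) :
    HasDerivAt (fun t => 2 * y t - 3 * w t)
      (9 * x t + (9 + w t) * (2 * y t - 3 * w t) + 2 * w t * y t) t :=
  ((hy.const_mul 2).sub (hw.const_mul 3)).congr_deriv (by ring)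

open Filter MeasureTheory in
theorem u_blows_up_and_unique_crossing_general
    (t0 : ℝ) (x y w : ℝ → ℝ)
    (hy : ∀ t < t0, HasDerivAt y (9 * x t + 18 * y t + 2 * y t * w t) t)
    (hw : ∀ t < t0, HasDerivAt w (3 * x t + 6 * y t + 9 * w t + (w t) ^ 2) t)
    (hpos : ∀ t < t0, 0 < x t ∧ 0 < y t ∧ 0 < w t)
    (hu : ∀ t < t0, 0 < 2 * y t - 3 * w t)
    (hint : ∫⁻ t in Set.Ioo (t0 - 1) t0, ENNReal.ofReal (y t + w t) = ⊤) :
    Tendsto (fun t => 2 * y t - 3 * w t) (nhdsWithin t0 (Set.Iio t0)) atTop ∧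
    ∃! t1 : ℝ, t1 < t0 ∧ 2 * y t1 - 3 * w t1 = 27 := by
  set u : ℝ → ℝ := fun t => 2 * y t - 3 * w t
  have hu' : ∀ t < t0, HasDerivAt u (9 * x t + (9 + w t) * u t + 2 * w t * y t) t :=
    fun t ht => hasDerivAt_two_mul_sub_three_mul (hy t ht) (hw t ht)
  have hu_mono : StrictMonoOn u (Iio t0) := strictMonoOn_Iio_of_hasDerivAt_pos hu' fun t ht => by
    obtain ⟨hxt, hyt, hwt⟩ := hpos t ht
    nlinarith [hu t ht, mul_pos hwt (hu t ht), mul_pos hwt hyt]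
  have hw_mono : MonotoneOn w (Iio t0) := (strictMonoOn_Iio_of_hasDerivAt_pos hw fun t ht => by
    obtain ⟨hxt, hyt, hwt⟩ := hpos t ht
    positivity).monotoneOn
  have hblow : Tendsto u (𝓝[<] t0) atTop := by
    have ha : t0 - 1 < t0 := by linarith
    have hsum_cont : ContinuousOn (fun t => y t + w t) (Ico (t0 - 1) t0) := fun t ht =>
      ((hy t ht.2).continuousAt.add (hw t ht.2).continuousAt).continuousWithinAt
    refine tendsto_nhdsLT_atTop_of_mul_le_deriv ha
      (mul_pos (by norm_num : (0 : ℝ) < 6 / 5) (hpos _ ha).2.2)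
      (fun t ht => hu' t ht.2) (hsum_cont.locallyIntegrableOn measurableSet_Ico)
      (fun t ht => (add_pos (hpos t ht.2).2.1 (hpos t ht.2).2.2).le) (fun t ht => ?_) hint
    obtain ⟨hxt, hyt, hwt⟩ := hpos t ht.2
    have hwa : w (t0 - 1) ≤ w t := hw_mono ha ht.2 ht.1.le
    nlinarith [hu t ht.2, (hpos _ ha).2.2, mul_le_mul_of_nonneg_right hwa hyt.le,
      mul_pos hwt (hu t ht.2), mul_pos (hpos _ ha).2.2 (hu t ht.2)]
  have hdecay : Tendsto u atBot (𝓝 0) :=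
    tendsto_atBot_nhds_zero_of_mul_le_deriv (by norm_num : (0 : ℝ) < 9) hu' (fun t ht => by
      obtain ⟨hxt, hyt, hwt⟩ := hpos t ht
      nlinarith [mul_pos hwt (hu t ht), mul_pos hwt hyt]) fun t ht => (hu t ht).le
  exact ⟨hblow, existsUnique_eq_of_strictMonoOn_Iio hu_mono
    (fun t ht => (hu' t ht).continuousAt.continuousWithinAt) hdecay hblow (by norm_num)⟩

open Filter MeasureTheory in
theorem u_blows_up_and_unique_crossing
    (t0 : ℝ) (x y w : ℝ → ℝ)
    (hx : ∀ t < t0, HasDerivAt x (27 * x t + 4 * (y t) ^ 2) t)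
    (hy : ∀ t < t0, HasDerivAt y (9 * x t + 18 * y t + 2 * y t * w t) t)
    (hw : ∀ t < t0, HasDerivAt w (3 * x t + 6 * y t + 9 * w t + (w t) ^ 2) t)
    (hpos : ∀ t < t0, 0 < x t ∧ 0 < y t ∧ 0 < w t)
    (hu : ∀ t < t0, 0 < 2 * y t - 3 * w t)
    (hint : ∫⁻ t in Set.Ioo (t0 - 1) t0, ENNReal.ofReal (y t + w t) = ⊤) :
    Tendsto (fun t => 2 * y t - 3 * w t) (nhdsWithin t0 (Set.Iio t0)) atTop ∧
    ∃! t1 : ℝ, t1 < t0 ∧ 2 * y t1 - 3 * w t1 = 27 :=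
  u_blows_up_and_unique_crossing_general t0 x y w hy hw hpos hu hint
end
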